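/- Sawa's moment formula for p = 1, q = 1/2: if U and V > 0 are real random variables with joint moment generating function φ(u,v) = E[e^{uU + vV}] finite for u in a neighborhood of 0 and all v ≤ 0, and E[|U|/√V] < ∞, then E[U/√V] = (1/Γ(1/2)) ∫₀^∞ v^{−1/2} (∂φ/∂u)(0, −v) dv. -/

import Mathlib

/-!
For `w > 0` the Gamma integral gives `Γ(1/2) / √w = ∫₀^∞ v^{-1/2} e^{-vw} dv`. Multiplying by `U`,
taking expectations and swapping the integrals (Fubini, justified since the absolute integrand
integrates to `Γ(1/2) E[|U|/√V] < ∞`) turns `Γ(1/2) E[U/√V]` into `∫₀^∞ v^{-1/2} E[U e^{-vV}] dv`.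
Finally `E[U e^{-vV}] = ∂φ/∂u (0, -v)` by differentiating under the expectation, which is dominated
near `u = 0` since `|x| e^{ux} ≤ (e^{2ax} + e^{-2ax}) / a` for `|u| ≤ a` and the m.g.f. is finite
at `u = ±2a`.
-/

open MeasureTheory Set Real

theorem integrableOn_rpow_neg_half_mul_exp_neg_mul {c : ℝ} (hc : 0 < c) :
    IntegrableOn (fun v : ℝ => v ^ (-(1:ℝ)/2) * exp (-v * c)) (Ioi 0) := by
  simpa only [rpow_one, neg_mul, mul_comm c] using
    integrableOn_rpow_mul_exp_neg_mul_rpow (p := 1) (s := -(1:ℝ)/2) (by norm_num) one_pos hc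

theorem integral_rpow_neg_half_mul_exp_neg_mul {c : ℝ} (hc : 0 < c) :
    ∫ v in Ioi (0:ℝ), v ^ (-(1:ℝ)/2) * exp (-v * c) = Gamma (1/2) / √c := by
  have h := integral_rpow_mul_exp_neg_mul_Ioi (a := 1/2) one_half_pos hc
  rw [show (1:ℝ)/2 - 1 = -(1:ℝ)/2 by norm_num, ← sqrt_eq_rpow, one_div, sqrt_inv] at h
  rw [div_eq_inv_mul (Gamma _), ← h]
  simp only [neg_mul, mul_comm c]

theorem abs_mul_exp_mul_le {a u : ℝ} (ha : 0 < a) (hu : |u| ≤ a) (x : ℝ) :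
    |x| * exp (u * x) ≤ (exp (2 * a * x) + exp (-2 * a * x)) / a := by
  have h_lin : a * |x| ≤ exp (a * |x|) := by linarith [add_one_le_exp (a * |x|)]
  have h_exp : exp (u * x) ≤ exp (a * |x|) := by
    rw [exp_le_exp]
    exact (le_abs_self _).trans (by rw [abs_mul]; gcongr)
  have h_abs : exp (2 * a * |x|) ≤ exp (2 * a * x) + exp (-2 * a * x) := by
    rcases abs_cases x with ⟨h, _⟩ | ⟨h, _⟩ <;> rw [h]
    · linarith [exp_pos (-2 * a * x)]
    · rw [show 2 * a * -x = -2 * a * x by ring]; linarith [exp_pos (2 * a * x)]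
  rw [le_div_iff₀ ha]
  calc |x| * exp (u * x) * a = a * |x| * exp (u * x) := by ring
    _ ≤ exp (a * |x|) * exp (a * |x|) := by gcongr
    _ = exp (2 * a * |x|) := by rw [← exp_add]; ring_nf
    _ ≤ _ := h_abs

section

variable {Ω : Type*} [MeasurableSpace Ω] {μ : Measure Ω}

theorem hasDerivAt_integral_exp_mul_add {X Y : Ω → ℝ} (hX : Measurable X) (hY : Measurable Y)
    {δ : ℝ} (hδ : 0 < δ) (hint : ∀ u ∈ Ioo (-δ) δ, Integrable (fun ω => exp (u * X ω + Y ω)) μ) :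
    HasDerivAt (fun u => ∫ ω, exp (u * X ω + Y ω) ∂μ) (∫ ω, X ω * exp (Y ω) ∂μ) 0 := by
  obtain ⟨a, ha, h2a⟩ : ∃ a, 0 < a ∧ 2 * a < δ := ⟨δ / 3, by positivity, by linarith⟩
  have h_bound_int : Integrable
      (fun ω => (exp (2 * a * X ω + Y ω) + exp (-2 * a * X ω + Y ω)) / a) μ :=
    ((hint _ ⟨by linarith, by linarith⟩).add (hint _ ⟨by linarith, by linarith⟩)).div_const a
  have h_bound : ∀ ω, ∀ u ∈ Metric.ball (0:ℝ) a, ‖X ω * exp (u * X ω + Y ω)‖ ≤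
      (exp (2 * a * X ω + Y ω) + exp (-2 * a * X ω + Y ω)) / a := by
    intro ω u hu
    rw [mem_ball_zero_iff, Real.norm_eq_abs] at hu
    calc ‖X ω * exp (u * X ω + Y ω)‖ = |X ω| * exp (u * X ω) * exp (Y ω) := by
          rw [norm_mul, Real.norm_eq_abs, Real.norm_eq_abs, abs_exp, exp_add, mul_assoc]
      _ ≤ (exp (2 * a * X ω) + exp (-2 * a * X ω)) / a * exp (Y ω) := by
          gcongr; exact abs_mul_exp_mul_le ha hu.le (X ω)
      _ = _ := by simp only [exp_add]; ring
  have h_diff : ∀ ω, ∀ u : ℝ, HasDerivAt (fun u => exp (u * X ω + Y ω))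
      (X ω * exp (u * X ω + Y ω)) u := fun ω u => by
    simpa [mul_comm] using (((hasDerivAt_id u).mul_const (X ω)).add_const (Y ω)).exp
  have := hasDerivAt_integral_of_dominated_loc_of_deriv_le
    (F := fun u ω => exp (u * X ω + Y ω)) (x₀ := 0) (Metric.ball_mem_nhds 0 ha)
    (.of_forall fun u => ((hX.const_mul u).add hY).exp.aestronglyMeasurable)
    (hint 0 ⟨by linarith, hδ⟩)
    ((hX.mul ((hX.const_mul 0).add hY).exp).aestronglyMeasurable)
    (.of_forall h_bound) h_bound_int (.of_forall fun ω u _ => h_diff ω u)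
  simpa only [zero_mul, zero_add] using this.2

theorem integral_rpow_neg_half_mul_integral_mul_exp_neg_mul [SFinite μ] {G W : Ω → ℝ}
    (hG : Measurable G) (hW : Measurable W) (hWpos : ∀ᵐ ω ∂μ, 0 < W ω)
    (hint : Integrable (fun ω => |G ω| / √(W ω)) μ) :
    ∫ v in Ioi (0:ℝ), v ^ (-(1:ℝ)/2) * ∫ ω, G ω * exp (-v * W ω) ∂μ =
      Gamma (1/2) * ∫ ω, G ω / √(W ω) ∂μ := by
  set k : ℝ → Ω → ℝ := fun v ω => v ^ (-(1:ℝ)/2) * (G ω * exp (-v * W ω))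
  have hk_eq : ∀ v ω, k v ω = G ω * (v ^ (-(1:ℝ)/2) * exp (-v * W ω)) := fun v ω => by
    simp only [k]; ring
  have hk_norm : ∀ ω, ∀ v ∈ Ioi (0:ℝ),
      ‖k v ω‖ = |G ω| * (v ^ (-(1:ℝ)/2) * exp (-v * W ω)) := fun ω v hv => by
    rw [hk_eq, norm_mul, Real.norm_eq_abs,
      Real.norm_of_nonneg (mul_nonneg (rpow_nonneg (le_of_lt hv) _) (exp_pos _).le)]
  have hk_meas : AEStronglyMeasurable (Function.uncurry k)
      ((volume.restrict (Ioi 0)).prod μ) := by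
    fun_prop
  have h_inner : ∀ᵐ ω ∂μ, IntegrableOn (k · ω) (Ioi 0) ∧
      ∫ v in Ioi (0:ℝ), ‖k v ω‖ = Gamma (1/2) * (|G ω| / √(W ω)) ∧
      ∫ v in Ioi (0:ℝ), k v ω = Gamma (1/2) * (G ω / √(W ω)) := by
    filter_upwards [hWpos] with ω hω
    refine ⟨?_, ?_, ?_⟩
    · simp only [hk_eq]
      exact (integrableOn_rpow_neg_half_mul_exp_neg_mul hω).const_mul _
    · rw [setIntegral_congr_fun measurableSet_Ioi (hk_norm ω), integral_const_mul,
        integral_rpow_neg_half_mul_exp_neg_mul hω]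
      ring
    · simp only [hk_eq]
      rw [integral_const_mul, integral_rpow_neg_half_mul_exp_neg_mul hω]
      ring
  have hk_int : Integrable (Function.uncurry k) ((volume.restrict (Ioi 0)).prod μ) := by
    refine (integrable_prod_iff' hk_meas).2 ⟨h_inner.mono fun ω h => h.1, ?_⟩
    refine (hint.const_mul (Gamma (1/2))).congr ?_
    filter_upwards [h_inner] with ω h
    exact h.2.1.symm
  calc ∫ v in Ioi (0:ℝ), v ^ (-(1:ℝ)/2) * ∫ ω, G ω * exp (-v * W ω) ∂μ
      = ∫ v in Ioi (0:ℝ), ∫ ω, k v ω ∂μ := by simp only [k, integral_const_mul]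
    _ = ∫ ω, (∫ v in Ioi (0:ℝ), k v ω) ∂μ := integral_integral_swap hk_int
    _ = ∫ ω, Gamma (1/2) * (G ω / √(W ω)) ∂μ :=
        integral_congr_ae (h_inner.mono fun ω h => h.2.2)
    _ = Gamma (1/2) * ∫ ω, G ω / √(W ω) ∂μ := integral_const_mul _ _

end

/-- Sawa's moment formula for `p = 1`, `q = 1/2`: if `U` and `V > 0` have joint
m.g.f. `φ(u,v) = E[exp(uU + vV)]`, finite for `u` in a neighborhood of `0` and all
`v ≤ 0`, and `E[|U|/√V] < ∞`, then
`E[U/√V] = (1/Γ(1/2)) ∫₀^∞ v^{−1/2} (∂φ/∂u)(0,−v) dv`. -/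
theorem sawa_moment_formula
    {Ω : Type*} [MeasurableSpace Ω] (μ : Measure Ω) [IsProbabilityMeasure μ]
    (U V : Ω → ℝ) (hU : Measurable U) (hV : Measurable V)
    (hVpos : ∀ᵐ ω ∂μ, 0 < V ω)
    (φ : ℝ → ℝ → ℝ)
    (hφ : ∀ u v, φ u v = ∫ ω, Real.exp (u * U ω + v * V ω) ∂μ)
    (δ : ℝ) (hδ : 0 < δ)
    (hmgf : ∀ u ∈ Set.Ioo (-δ) δ, ∀ v ≤ (0:ℝ),
      Integrable (fun ω => Real.exp (u * U ω + v * V ω)) μ)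
    (hint : Integrable (fun ω => |U ω| / Real.sqrt (V ω)) μ)
    (φ' : ℝ → ℝ)
    (hderiv : ∀ v > (0:ℝ), HasDerivAt (fun u => φ u (-v)) (φ' v) 0) :
    ∫ ω, U ω / Real.sqrt (V ω) ∂μ =
      (1 / Real.Gamma (1/2)) *
        ∫ v in Set.Ioi (0:ℝ), v ^ (-(1:ℝ)/2) * φ' v := by
  have hφ' : ∀ v ∈ Ioi (0:ℝ), φ' v = ∫ ω, U ω * exp (-v * V ω) ∂μ := fun v hv =>
    (hderiv v hv).unique <| by
      simpa only [hφ] using hasDerivAt_integral_exp_mul_add hU (hV.const_mul (-v)) hδ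
        fun u hu => hmgf u hu (-v) (neg_nonpos.2 (le_of_lt hv))
  rw [setIntegral_congr_fun measurableSet_Ioi fun v hv => by rw [hφ' v hv],
    integral_rpow_neg_half_mul_integral_mul_exp_neg_mul hU hV hVpos hint,
    one_div, inv_mul_cancel_left₀ (Gamma_pos_of_pos one_half_pos).ne']
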